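/- arXiv:1207.5722 — 7 statements merged into one kernel-verified Lean document; each statement's English description precedes it below -/
import Mathlib

section
/- Let G=(V,E) be an undirected graph, let T ⊆ V have even cardinality, let F be a multiset of edges of G, and let D be the set of wrong-degree nodes with respect to F and T (nodes of T with even degree in F and nodes of V∖T with odd degree in F). If U ⊆ V satisfies that both |U ∩ T| and |U ∩ D| are odd, then the number |δ_F(U)| of edges of F (counted with multiplicity) with exactly one endpoint in U is even. -/
open Finset
open scoped Classical

variable {V : Type*}

/-- The cut of a multiset of edges `F` (given by multiplicities on `Sym2 V`) across the
vertex set `U`: the number of edges, counted with multiplicity, with exactly one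
endpoint in `U`. -/
def mCut [Fintype V] [DecidableEq V] (F : Sym2 V → ℕ) (U : Finset V) : ℕ :=
  ∑ u ∈ U, ∑ w ∈ Uᶜ, F s(u, w)

/-- The degree of a vertex `v` in the multiset of edges `F`. -/
def mDeg [Fintype V] (F : Sym2 V → ℕ) (v : V) : ℕ :=
  ∑ w : V, F s(v, w)


/-!
Work modulo 2. Since `F` has no loops, summing the degrees over `U` counts every edge inside `U`
twice and every edge of the cut once, so `|δ_F(U)| ≡ ∑_{u ∈ U} deg_F u`. By the definition of
`D`, `deg_F v ≡ [v ∈ T] + [v ∈ D]` for every vertex, hence `|δ_F(U)| ≡ |U ∩ T| + |U ∩ D| ≡ 1 + 1`.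
-/

theorem Finset.sum_sum_eq_zero_of_symm_of_charTwo {α R : Type*} [Semiring R] [CharP R 2]
    (s : Finset α) (f : α → α → R) (hsymm : ∀ a b, f a b = f b a) (hdiag : ∀ a, f a a = 0) :
    ∑ a ∈ s, ∑ b ∈ s, f a b = 0 := by
  rw [← sum_product']
  refine sum_involution (fun p _ => p.swap) (fun p _ => ?_) (fun p _ hp hfix => ?_)
    (fun p hp => mem_product.mpr (mem_product.mp hp).symm) (fun p _ => p.swap_swap)
  · rw [Prod.fst_swap, Prod.snd_swap, ← hsymm, CharTwo.add_self_eq_zero]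
  · obtain ⟨a, b⟩ := p
    obtain rfl : a = b := (Prod.ext_iff.mp hfix).2
    exact hp (hdiag a)

theorem mCut_cast_eq_sum_mDeg [Fintype V] [DecidableEq V] {F : Sym2 V → ℕ}
    (hloop : ∀ v, F s(v, v) = 0) (U : Finset V) :
    (mCut F U : ZMod 2) = ∑ u ∈ U, (mDeg F u : ZMod 2) := by
  have hinner : ∑ u ∈ U, ∑ w ∈ U, (F s(u, w) : ZMod 2) = 0 :=
    U.sum_sum_eq_zero_of_symm_of_charTwo _ (fun u w => by rw [Sym2.eq_swap])
      (fun u => by rw [hloop, Nat.cast_zero])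
  calc (mCut F U : ZMod 2)
      = ∑ u ∈ U, ∑ w ∈ U, (F s(u, w) : ZMod 2) + ∑ u ∈ U, ∑ w ∈ Uᶜ, (F s(u, w) : ZMod 2) := by
        rw [hinner, zero_add, mCut]; push_cast; rfl
    _ = ∑ u ∈ U, (mDeg F u : ZMod 2) := by
        rw [← sum_add_distrib]
        refine sum_congr rfl fun u _ => ?_
        rw [mDeg, Nat.cast_sum, sum_add_sum_compl]

theorem mDeg_cast_eq_ite_add_ite [Fintype V] [DecidableEq V] {F : Sym2 V → ℕ} {T D : Finset V}
    (hD : ∀ v, v ∈ D ↔ ((v ∈ T ∧ Even (mDeg F v)) ∨ (v ∉ T ∧ Odd (mDeg F v)))) (v : V) :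
    (mDeg F v : ZMod 2) = (if v ∈ T then 1 else 0) + (if v ∈ D then 1 else 0) := by
  rcases Nat.even_or_odd (mDeg F v) with h | h <;> by_cases hv : v ∈ T
  all_goals simp [hD, hv, h, ZMod.natCast_eq_zero_iff_even.mpr, ZMod.natCast_eq_one_iff_odd.mpr,
    Nat.not_odd_iff_even, Nat.not_even_iff_odd, CharTwo.add_self_eq_zero]

theorem stmt1_general {V : Type*} [Fintype V] [DecidableEq V]
    (G : SimpleGraph V) (T : Finset V)
    (F : Sym2 V → ℕ) (hsupp : ∀ e, F e ≠ 0 → e ∈ G.edgeSet)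
    (D : Finset V)
    (hD : ∀ v, v ∈ D ↔ ((v ∈ T ∧ Even (mDeg F v)) ∨ (v ∉ T ∧ Odd (mDeg F v))))
    (U : Finset V)
    (hUT : Odd ((U ∩ T).card)) (hUD : Odd ((U ∩ D).card)) :
    Even (mCut F U) := by
  have hloop : ∀ v, F s(v, v) = 0 := fun v =>
    by_contra fun h => G.not_isDiag_of_mem_edgeSet (hsupp _ h) (Sym2.mk_isDiag_iff.mpr rfl)
  rw [← ZMod.natCast_eq_zero_iff_even, mCut_cast_eq_sum_mDeg hloop]
  simp_rw [mDeg_cast_eq_ite_add_ite hD]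
  rw [sum_add_distrib, sum_boole, sum_boole, filter_mem_eq_inter, filter_mem_eq_inter,
    ZMod.natCast_eq_one_iff_odd.mpr hUT, ZMod.natCast_eq_one_iff_odd.mpr hUD]
  exact CharTwo.add_self_eq_zero 1

theorem stmt1 {V : Type*} [Fintype V] [DecidableEq V]
    (G : SimpleGraph V) (T : Finset V) (hT : Even T.card)
    (F : Sym2 V → ℕ) (hsupp : ∀ e, F e ≠ 0 → e ∈ G.edgeSet)
    (D : Finset V)
    (hD : ∀ v, v ∈ D ↔ ((v ∈ T ∧ Even (mDeg F v)) ∨ (v ∉ T ∧ Odd (mDeg F v))))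
    (U : Finset V)
    (hUT : Odd ((U ∩ T).card)) (hUD : Odd ((U ∩ D).card)) :
    Even (mCut F U) :=
  stmt1_general G T F hsupp D hD U hUT hUD
end

section
/- Let G=(V,E) be a complete graph on at least two vertices with nonnegative edge costs c satisfying the triangle inequality (a metric graph), and let T ⊆ V be a nonempty set of even cardinality. Then for every connected T-join F of G there exists a spanning tree J of G that is itself a connected T-join (every node of T has odd degree in J and every node of V∖T has even degree in J) with cost c(J) ≤ c(F). -/
open Finset
open scoped Classical

variable {V : Type*}

/-- The simple graph underlying a multiset of edges `F`: `u` and `w` are adjacent iff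
`u ≠ w` and the edge `{u,w}` has positive multiplicity in `F`. -/
def fromMultiset (F : Sym2 V → ℕ) : SimpleGraph V where
  Adj u w := u ≠ w ∧ F s(u, w) ≠ 0
  symm := ⟨fun u w h => ⟨h.1.symm, by rw [Sym2.eq_swap]; exact h.2⟩⟩
  loopless := ⟨fun v h => h.1 rfl⟩

/-- The cost of a multiset of edges `F` with respect to edge costs `c`
(each unordered pair is counted exactly once). -/
noncomputable def mCost [Fintype V] (c : Sym2 V → ℝ) (F : Sym2 V → ℕ) : ℝ :=
  (∑ u : V, ∑ w : V, (F s(u, w) : ℝ) * c s(u, w)) / 2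

/-- The cost of (the edge set of) a simple graph `J` with respect to edge costs `c`. -/
noncomputable def tCost [Fintype V] (c : Sym2 V → ℝ) (J : SimpleGraph V) : ℝ :=
  (∑ u : V, ∑ w : V, if J.Adj u w then c s(u, w) else 0) / 2

/-- The degree of a vertex `v` in a simple graph `J`. -/
noncomputable def treeDeg (J : SimpleGraph V) (v : V) : ℕ :=
  Nat.card {w // J.Adj v w}

/-! A connected `T`-join `F` that is not a spanning tree can be replaced by one with fewer
edges (counted with multiplicity), no larger cost and the same odd-degree vertices:
* an edge of multiplicity at least three loses two copies;
* otherwise, at a vertex `w` with edges `wx`, `wy` (`x ≠ y`) one *shortcuts* them by `xy`.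
  Degree parities are unchanged and the triangle inequality bounds the cost. The graph stays
  connected if a second copy of `wx` is left, or if `wx` lies on a cycle through a neighbour
  `u ≠ y` of `w`; such a `w` exists unless `F` is a doubled edge or a simple cycle, whose
  degrees are all even, which is impossible when `T ≠ ∅`.
Iterating, the edge count eventually stops decreasing, and then `F` is a tree. -/

namespace SimpleGraph

variable {G H : SimpleGraph V}

theorem Connected.of_adj_imp_reachable (hG : G.Connected)
    (h : ∀ ⦃a b⦄, G.Adj a b → H.Reachable a b) : H.Connected := by
  rw [connected_iff]
  refine ⟨fun a b => ?_, hG.nonempty⟩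
  rw [reachable_iff_reflTransGen]
  refine ((reachable_iff_reflTransGen a b).mp (hG.preconnected a b)).lift' id fun a b hab => ?_
  exact (reachable_iff_reflTransGen a b).mp (h hab)

theorem Preconnected.mem_of_adj_closed (hG : G.Preconnected) {S : Set V}
    (hS : ∀ ⦃a b⦄, G.Adj a b → a ∈ S → b ∈ S) {a : V} (ha : a ∈ S) (b : V) : b ∈ S := by
  obtain ⟨p⟩ := hG a b
  induction p with
  | nil => exact ha
  | cons h _ ih => exact ih (hS h ha)

theorem exists_adj_walk_of_not_isBridge {w x : V} (hx : G.Adj w x) (hb : ¬ G.IsBridge s(w, x)) :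
    ∃ u, u ≠ x ∧ G.Adj w u ∧ ∃ q : G.Walk u x, w ∉ q.support := by
  rw [isBridge_iff_forall_walk_mem_edges] at hb
  push Not at hb
  obtain ⟨p, hp⟩ := hb
  have hpath := p.bypass_isPath
  have hedges := p.edges_bypass_subset_edges
  generalize p.bypass = r at hpath hedges
  cases r with
  | nil => exact absurd hx (G.loopless.irrefl _)
  | cons hu q =>
    rename_i u
    rw [Walk.cons_isPath_iff] at hpath
    refine ⟨u, ?_, hu, q, hpath.2⟩
    rintro rfl
    exact hp (hedges (by simp))

theorem not_isBridge_of_walk {w x u : V} (hx : G.Adj w x) (hux : u ≠ x) (q : G.Walk x u)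
    (hq : w ∉ q.support) : ¬ G.IsBridge s(w, u) := by
  rw [isBridge_iff_forall_walk_mem_edges]
  push Not
  refine ⟨Walk.cons hx q, ?_⟩
  simp only [Walk.edges_cons, List.mem_cons, not_or]
  exact ⟨fun h => hux (Sym2.congr_right.mp h), fun h => hq (q.fst_mem_support_of_mem_edges h)⟩

theorem neighborFinset_eq_pair {w u x : V} [Fintype (G.neighborSet w)] (h : G.degree w ≤ 2)
    (hu : G.Adj w u) (hx : G.Adj w x) (hux : u ≠ x) : G.neighborFinset w = {u, x} := by
  refine (Finset.eq_of_subset_of_card_le ?_ ?_).symm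
  · simp [Finset.insert_subset_iff, hu, hx]
  · rwa [Finset.card_pair hux, card_neighborFinset_eq_degree]

variable [Fintype V]

theorem Connected.isRegularOfDegree_two [DecidableRel G.Adj] (hG : G.Connected)
    (hcyc : ¬ G.IsAcyclic)
    (hdeg : ∀ ⦃w x⦄, G.Adj w x → ¬ G.IsBridge s(w, x) → G.degree w ≤ 2) :
    G.IsRegularOfDegree 2 := by
  let S : Set V := {w | ∃ x, G.Adj w x ∧ ¬ G.IsBridge s(w, x)}
  have hears : ∀ w ∈ S, ∃ u x, u ≠ x ∧ G.neighborFinset w = {u, x} ∧ u ∈ S ∧ x ∈ S := by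
    rintro w ⟨x, hx, hb⟩
    obtain ⟨u, hux, hu, q, hq⟩ := exists_adj_walk_of_not_isBridge hx hb
    refine ⟨u, x, hux, neighborFinset_eq_pair (hdeg hx hb) hu hx hux, ⟨w, hu.symm, ?_⟩,
      ⟨w, hx.symm, ?_⟩⟩
    · rw [Sym2.eq_swap]
      exact not_isBridge_of_walk hx hux q.reverse (by simpa using hq)
    · rwa [Sym2.eq_swap]
  have hclosed : ∀ ⦃a b⦄, G.Adj a b → a ∈ S → b ∈ S := by
    intro a b hab ha
    obtain ⟨u, x, -, hN, hu, hx⟩ := hears a ha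
    have hb : b ∈ G.neighborFinset a := (mem_neighborFinset _ _ _).mpr hab
    rw [hN, Finset.mem_insert, Finset.mem_singleton] at hb
    rcases hb with rfl | rfl
    exacts [hu, hx]
  obtain ⟨w, x, hx, hb⟩ : ∃ w x, G.Adj w x ∧ ¬ G.IsBridge s(w, x) := by
    simpa [isAcyclic_iff_forall_adj_isBridge] using hcyc
  intro v
  obtain ⟨u, x, hux, hN, -, -⟩ := hears v (hG.preconnected.mem_of_adj_closed hclosed ⟨x, hx, hb⟩ v)
  rw [← card_neighborFinset_eq_degree, hN, Finset.card_pair hux]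

end SimpleGraph

def Loopless (F : Sym2 V → ℕ) : Prop := ∀ e, F e ≠ 0 → ¬ e.IsDiag

theorem Loopless.adj_of_ne_zero {F : Sym2 V → ℕ} (hF : Loopless F) {a b : V}
    (h : F s(a, b) ≠ 0) : (fromMultiset F).Adj a b :=
  ⟨fun hab => hF _ h (Sym2.mk_isDiag_iff.mpr hab), h⟩

section Multigraph

variable [Fintype V]

theorem mDeg_add (F G : Sym2 V → ℕ) (v : V) : mDeg (F + G) v = mDeg F v + mDeg G v :=
  Finset.sum_add_distrib

theorem mCost_add (c : Sym2 V → ℝ) (F G : Sym2 V → ℕ) :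
    mCost c (F + G) = mCost c F + mCost c G := by
  simp only [mCost, Pi.add_apply, Nat.cast_add, add_mul, Finset.sum_add_distrib]
  ring

theorem mDeg_single {a b : V} (hab : a ≠ b) (n : ℕ) (v : V) :
    mDeg (Pi.single s(a, b) n) v = if v = a ∨ v = b then n else 0 := by
  rcases eq_or_ne v a with rfl | hva
  · simp [mDeg, Pi.single_apply, hab]
  rcases eq_or_ne v b with rfl | hvb
  · simp [mDeg, Pi.single_apply, hva, Sym2.eq_swap (a := v)]
  · simp [mDeg, hva, hvb]

theorem mCost_single (c : Sym2 V → ℝ) {a b : V} (hab : a ≠ b) (n : ℕ) :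
    mCost c (Pi.single s(a, b) n) = n * c s(a, b) := by
  have hterm : ∀ u z : V, ((Pi.single s(a, b) n : Sym2 V → ℕ) s(u, z) : ℝ) * c s(u, z) =
      ((Pi.single s(a, b) n : Sym2 V → ℕ) s(u, z) : ℝ) * c s(a, b) := by
    intro u z
    rcases eq_or_ne s(u, z) s(a, b) with h | h
    · rw [h]
    · simp [h]
  have hdeg : ∑ u : V, mDeg (Pi.single s(a, b) n) u = 2 * n := by
    have hsplit : ∀ u : V, (if u = a ∨ u = b then n else 0) =
        (if u = a then n else 0) + (if u = b then n else 0) := by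
      intro u
      rcases eq_or_ne u a with rfl | hua <;> simp [*]
    simp only [mDeg_single hab, hsplit, Finset.sum_add_distrib, Finset.sum_ite_eq',
      Finset.mem_univ, if_true]
    ring
  have hdeg' : ∑ u : V, ∑ z : V, ((Pi.single s(a, b) n : Sym2 V → ℕ) s(u, z) : ℝ) = 2 * n := by
    exact_mod_cast hdeg
  simp only [mCost, hterm, ← Finset.sum_mul, hdeg']
  ring

end Multigraph

section Shortcut

variable {F : Sym2 V → ℕ} {w x y : V}

noncomputable def shortcut (F : Sym2 V → ℕ) (w x y : V) : Sym2 V → ℕ :=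
  F - Pi.single s(w, x) 1 - Pi.single s(w, y) 1 + Pi.single s(x, y) 1

theorem le_shortcut_apply {e : Sym2 V} (hx : e ≠ s(w, x)) (hy : e ≠ s(w, y)) :
    F e ≤ shortcut F w x y e := by
  simp [shortcut, Pi.single_apply, hx, hy]

theorem shortcut_apply_ne_zero : shortcut F w x y s(x, y) ≠ 0 := by
  simp [shortcut]

theorem Loopless.shortcut (hF : Loopless F) (hxy : x ≠ y) : Loopless (shortcut F w x y) := by
  intro e he
  rcases eq_or_ne e s(x, y) with rfl | hexy
  · exact Sym2.mk_isDiag_iff.not.mpr hxy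
  · refine hF e fun h0 => he ?_
    simp [_root_.shortcut, Pi.single_apply, hexy, h0]

theorem shortcut_add_single_add_single (hx : (fromMultiset F).Adj w x)
    (hy : (fromMultiset F).Adj w y) (hxy : x ≠ y) :
    shortcut F w x y + Pi.single s(w, x) 1 + Pi.single s(w, y) 1 = F + Pi.single s(x, y) 1 := by
  have hne : s(w, x) ≠ s(w, y) := fun h => hxy (Sym2.congr_right.mp h)
  have h1 := hx.2
  have h2 := hy.2
  ext e
  simp only [shortcut, Pi.add_apply, Pi.sub_apply, Pi.single_apply]
  split_ifs <;> subst_vars <;> first | omega | exact absurd ‹_› hne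

variable [Fintype V]

theorem odd_mDeg_shortcut_iff (hx : (fromMultiset F).Adj w x) (hy : (fromMultiset F).Adj w y)
    (hxy : x ≠ y) (v : V) : Odd (mDeg (shortcut F w x y) v) ↔ Odd (mDeg F v) := by
  have h : mDeg (shortcut F w x y) v + (if v = w ∨ v = x then 1 else 0) +
      (if v = w ∨ v = y then 1 else 0) = mDeg F v + if v = x ∨ v = y then 1 else 0 := by
    rw [← mDeg_single hx.1, ← mDeg_single hy.1, ← mDeg_single hxy, ← mDeg_add, ← mDeg_add,
      ← mDeg_add, shortcut_add_single_add_single hx hy hxy]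
  have hwx := hx.1
  have hwy := hy.1
  rw [Nat.odd_iff, Nat.odd_iff]
  split_ifs at h <;> first | omega | grind

theorem mCost_shortcut_le (c : Sym2 V → ℝ) (htri : ∀ u v w : V, c s(u, v) ≤ c s(u, w) + c s(w, v))
    (hx : (fromMultiset F).Adj w x) (hy : (fromMultiset F).Adj w y) (hxy : x ≠ y) :
    mCost c (shortcut F w x y) ≤ mCost c F := by
  have h := congrArg (mCost c) (shortcut_add_single_add_single hx hy hxy)
  simp only [mCost_add, mCost_single c hx.1, mCost_single c hy.1, mCost_single c hxy,
    Nat.cast_one, one_mul] at h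
  have := htri x y w
  rw [Sym2.eq_swap (a := x) (b := w)] at this
  linarith

theorem sum_shortcut_lt (hx : (fromMultiset F).Adj w x) (hy : (fromMultiset F).Adj w y)
    (hxy : x ≠ y) : ∑ e, shortcut F w x y e < ∑ e, F e := by
  have h := congrArg (fun G : Sym2 V → ℕ => ∑ e, G e) (shortcut_add_single_add_single hx hy hxy)
  simp only [Pi.add_apply, Finset.sum_add_distrib, Fintype.sum_pi_single'] at h
  omega

end Shortcut

section Reduction

variable {F : Sym2 V → ℕ}

theorem fromMultiset_shortcut_adj {a b w x y : V} (h : (fromMultiset F).Adj a b)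
    (hx : s(a, b) ≠ s(w, x)) (hy : s(a, b) ≠ s(w, y)) :
    (fromMultiset (shortcut F w x y)).Adj a b :=
  ⟨h.1, fun h0 => h.2 (Nat.eq_zero_of_le_zero (h0 ▸ le_shortcut_apply hx hy))⟩

theorem connected_shortcut {w x y : V} (hconn : (fromMultiset F).Connected) (hxy : x ≠ y)
    (hreach : (fromMultiset (shortcut F w x y)).Reachable w x) :
    (fromMultiset (shortcut F w x y)).Connected := by
  have hwy : (fromMultiset (shortcut F w x y)).Reachable w y :=
    hreach.trans (SimpleGraph.Adj.reachable ⟨hxy, shortcut_apply_ne_zero⟩)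
  refine hconn.of_adj_imp_reachable fun a b hab => ?_
  by_cases hx : s(a, b) = s(w, x)
  · rcases Sym2.eq_iff.mp hx with ⟨rfl, rfl⟩ | ⟨rfl, rfl⟩
    exacts [hreach, hreach.symm]
  by_cases hy : s(a, b) = s(w, y)
  · rcases Sym2.eq_iff.mp hy with ⟨rfl, rfl⟩ | ⟨rfl, rfl⟩
    exacts [hwy, hwy.symm]
  exact (fromMultiset_shortcut_adj hab hx hy).reachable

variable [Fintype V]

structure IsReduction (c : Sym2 V → ℝ) (F' F : Sym2 V → ℕ) : Prop where
  loopless : Loopless F'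
  connected : (fromMultiset F').Connected
  odd_mDeg_iff : ∀ v, Odd (mDeg F' v) ↔ Odd (mDeg F v)
  mCost_le : mCost c F' ≤ mCost c F
  sum_lt : ∑ e, F' e < ∑ e, F e

variable {c : Sym2 V → ℝ}

theorem isReduction_shortcut (htri : ∀ u v w : V, c s(u, v) ≤ c s(u, w) + c s(w, v))
    (hF : Loopless F) (hconn : (fromMultiset F).Connected) {w x y : V}
    (hx : (fromMultiset F).Adj w x) (hy : (fromMultiset F).Adj w y) (hxy : x ≠ y)
    (hreach : (fromMultiset (shortcut F w x y)).Reachable w x) :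
    IsReduction c (shortcut F w x y) F :=
  ⟨hF.shortcut hxy, connected_shortcut hconn hxy hreach, odd_mDeg_shortcut_iff hx hy hxy,
    mCost_shortcut_le c htri hx hy hxy, sum_shortcut_lt hx hy hxy⟩

theorem isReduction_sub_single (hc0 : ∀ e, 0 ≤ c e) (hF : Loopless F)
    (hconn : (fromMultiset F).Connected) {u w : V} (h3 : 3 ≤ F s(u, w)) :
    IsReduction c (F - Pi.single s(u, w) 2) F := by
  have huw : u ≠ w := (hF.adj_of_ne_zero (by omega)).1
  have hadd : F - Pi.single s(u, w) 2 + Pi.single s(u, w) 2 = F := by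
    ext e
    simp only [Pi.add_apply, Pi.sub_apply, Pi.single_apply]
    split_ifs with he
    · subst he; omega
    · omega
  have hgraph : fromMultiset (F - Pi.single s(u, w) 2) = fromMultiset F := by
    ext a b
    simp only [fromMultiset, Pi.sub_apply, Pi.single_apply]
    split_ifs with he
    · have h0 : F s(u, w) - 2 ≠ 0 ↔ F s(u, w) ≠ 0 := by omega
      rw [he, h0]
    · rfl
  refine ⟨fun e he => hF e fun h0 => he (by simp [h0]), hgraph ▸ hconn, fun v => ?_, ?_, ?_⟩
  · have h := congrArg (mDeg · v) hadd
    simp only [mDeg_add, mDeg_single huw] at h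
    rw [Nat.odd_iff, Nat.odd_iff]
    split_ifs at h <;> omega
  · have h := congrArg (mCost c) hadd
    rw [mCost_add, mCost_single c huw] at h
    have := hc0 s(u, w)
    push_cast at h
    linarith
  · have h := congrArg (fun G : Sym2 V → ℕ => ∑ e, G e) hadd
    simp only [Pi.add_apply, Finset.sum_add_distrib, Fintype.sum_pi_single'] at h
    omega

end Reduction

section Simple

variable {F : Sym2 V → ℕ}

theorem apply_eq_ite_adj (hF : Loopless F) (hsimple : ∀ e, F e ≤ 1) (a b : V) :
    F s(a, b) = if (fromMultiset F).Adj a b then 1 else 0 := by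
  by_cases h : (fromMultiset F).Adj a b
  · have := hsimple s(a, b)
    have := h.2
    rw [if_pos h]
    omega
  · rw [if_neg h]
    by_contra h0
    exact h (hF.adj_of_ne_zero h0)

variable [Fintype V]

theorem mDeg_eq_degree (hF : Loopless F) (hsimple : ∀ e, F e ≤ 1) (v : V) :
    mDeg F v = (fromMultiset F).degree v := by
  simp only [mDeg, apply_eq_ite_adj hF hsimple, Finset.sum_boole, Nat.cast_id,
    ← SimpleGraph.card_neighborFinset_eq_degree, SimpleGraph.neighborFinset_eq_filter]

theorem tCost_fromMultiset (c : Sym2 V → ℝ) (hF : Loopless F) (hsimple : ∀ e, F e ≤ 1) :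
    tCost c (fromMultiset F) = mCost c F := by
  simp only [tCost, mCost, apply_eq_ite_adj hF hsimple, Nat.cast_ite, Nat.cast_one, Nat.cast_zero,
    ite_mul, one_mul, zero_mul]

theorem treeDeg_eq_degree (J : SimpleGraph V) (v : V) : treeDeg J v = J.degree v := by
  rw [← SimpleGraph.card_neighborSet_eq_degree, ← Nat.card_eq_fintype_card]
  rfl

end Simple

section Existence

variable [Fintype V] {c : Sym2 V → ℝ} {F : Sym2 V → ℕ}

theorem mDeg_eq_apply_of_forall_adj (hF : Loopless F) {u w : V}
    (h : ∀ z, z ≠ w → ¬ (fromMultiset F).Adj u z) : mDeg F u = F s(u, w) :=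
  Finset.sum_eq_single w (fun z _ hzw => not_not.mp fun hz => h z hzw (hF.adj_of_ne_zero hz))
    (by simp)

theorem isReduction_shortcut_of_two_le (htri : ∀ u v w : V, c s(u, v) ≤ c s(u, w) + c s(w, v))
    (hF : Loopless F) (hconn : (fromMultiset F).Connected) {w x y : V} (h2 : 2 ≤ F s(w, x))
    (hy : (fromMultiset F).Adj w y) (hxy : x ≠ y) : IsReduction c (shortcut F w x y) F := by
  have hx : (fromMultiset F).Adj w x := hF.adj_of_ne_zero (by omega)
  have hne : s(w, x) ≠ s(w, y) := fun h => hxy (Sym2.congr_right.mp h)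
  refine isReduction_shortcut htri hF hconn hx hy hxy (SimpleGraph.Adj.reachable ⟨hx.1, ?_⟩)
  -- a copy of `wx` is left
  simp only [shortcut, Pi.add_apply, Pi.sub_apply, Pi.single_eq_same, Pi.single_eq_of_ne hne]
  omega

theorem exists_isReduction_of_two_le (hc0 : ∀ e, 0 ≤ c e)
    (htri : ∀ u v w : V, c s(u, v) ≤ c s(u, w) + c s(w, v)) (hF : Loopless F)
    (hconn : (fromMultiset F).Connected) (hodd : ∃ v, Odd (mDeg F v)) {u w : V}
    (h2 : 2 ≤ F s(u, w)) : ∃ F', IsReduction c F' F := by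
  by_cases h3 : 3 ≤ F s(u, w)
  · exact ⟨_, isReduction_sub_single hc0 hF hconn h3⟩
  by_cases hu : ∃ z, z ≠ w ∧ (fromMultiset F).Adj u z
  · obtain ⟨z, hzw, hz⟩ := hu
    exact ⟨_, isReduction_shortcut_of_two_le htri hF hconn h2 hz hzw.symm⟩
  by_cases hw : ∃ z, z ≠ u ∧ (fromMultiset F).Adj w z
  · obtain ⟨z, hzu, hz⟩ := hw
    rw [Sym2.eq_swap] at h2
    exact ⟨_, isReduction_shortcut_of_two_le htri hF hconn h2 hz hzu.symm⟩
  push Not at hu hw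
  exfalso
  -- `F` is just the edge `uw`, doubled, so all degrees are even
  have hV : ∀ v, v ∈ ({u, w} : Set V) := by
    refine hconn.preconnected.mem_of_adj_closed ?_ (Set.mem_insert u _)
    rintro a b hab (rfl | rfl)
    exacts [Or.inr (not_not.mp fun h => hu b h hab), Or.inl (not_not.mp fun h => hw b h hab)]
  obtain ⟨v, hv⟩ := hodd
  rcases hV v with rfl | rfl
  · rw [mDeg_eq_apply_of_forall_adj hF hu, Nat.odd_iff] at hv
    omega
  · rw [mDeg_eq_apply_of_forall_adj hF hw, Sym2.eq_swap, Nat.odd_iff] at hv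
    omega

theorem exists_isReduction_of_not_isBridge
    (htri : ∀ u v w : V, c s(u, v) ≤ c s(u, w) + c s(w, v)) (hF : Loopless F)
    (hconn : (fromMultiset F).Connected) {w x : V} (hx : (fromMultiset F).Adj w x)
    (hb : ¬ (fromMultiset F).IsBridge s(w, x)) (hdeg : 3 ≤ (fromMultiset F).degree w) :
    ∃ F', IsReduction c F' F := by
  obtain ⟨u, hux, hu, q, hq⟩ := SimpleGraph.exists_adj_walk_of_not_isBridge hx hb
  obtain ⟨y, hy, hyux⟩ := Finset.exists_mem_notMem_of_card_lt_card
    (s := {u, x}) (t := (fromMultiset F).neighborFinset w)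
    (by rw [Finset.card_pair hux, SimpleGraph.card_neighborFinset_eq_degree]; omega)
  rw [SimpleGraph.mem_neighborFinset] at hy
  simp only [Finset.mem_insert, Finset.mem_singleton, not_or] at hyux
  have huy : s(w, u) ≠ s(w, y) := fun h => hyux.1 (Sym2.congr_right.mp h).symm
  have hux' : s(w, u) ≠ s(w, x) := fun h => hux (Sym2.congr_right.mp h)
  refine ⟨_, isReduction_shortcut htri hF hconn hx hy (Ne.symm hyux.2) ?_⟩
  -- `w – u` and the walk `q` from `u` to `x` avoid the two removed edges at `w`
  have hq' : (fromMultiset (shortcut F w x y)).Reachable u x := by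
    refine ⟨q.transfer _ fun e he => ?_⟩
    induction e using Sym2.ind with
    | h a b =>
      have hw : w ∉ s(a, b) := fun hw => hq (q.mem_support_of_mem_edges he hw)
      exact fromMultiset_shortcut_adj (q.edges_subset_edgeSet he)
        (fun h => hw (h ▸ Sym2.mem_mk_left w x)) (fun h => hw (h ▸ Sym2.mem_mk_left w y))
  exact (fromMultiset_shortcut_adj hu hux' huy).reachable.trans hq'

theorem exists_isReduction_of_not_isAcyclic
    (htri : ∀ u v w : V, c s(u, v) ≤ c s(u, w) + c s(w, v)) (hF : Loopless F)
    (hconn : (fromMultiset F).Connected) (hodd : ∃ v, Odd (mDeg F v))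
    (hsimple : ∀ e, F e ≤ 1) (hcyc : ¬ (fromMultiset F).IsAcyclic) :
    ∃ F', IsReduction c F' F := by
  by_cases hbig : ∃ w x, (fromMultiset F).Adj w x ∧ ¬ (fromMultiset F).IsBridge s(w, x) ∧
      3 ≤ (fromMultiset F).degree w
  · obtain ⟨w, x, hx, hb, hdeg⟩ := hbig
    exact exists_isReduction_of_not_isBridge htri hF hconn hx hb hdeg
  push Not at hbig
  exfalso
  obtain ⟨v, hv⟩ := hodd
  rw [mDeg_eq_degree hF hsimple,
    hconn.isRegularOfDegree_two hcyc (fun w x hx hb => Nat.le_of_lt_succ (hbig w x hx hb)) v] at hv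
  exact (by decide : ¬ Odd 2) hv

end Existence

section Main

variable [Fintype V] {c : Sym2 V → ℝ}

theorem exists_isReduction (hc0 : ∀ e, 0 ≤ c e)
    (htri : ∀ u v w : V, c s(u, v) ≤ c s(u, w) + c s(w, v)) {F : Sym2 V → ℕ} (hF : Loopless F)
    (hconn : (fromMultiset F).Connected) (hodd : ∃ v, Odd (mDeg F v))
    (hnt : ¬ ((∀ e, F e ≤ 1) ∧ (fromMultiset F).IsAcyclic)) : ∃ F', IsReduction c F' F := by
  by_cases hsimple : ∀ e, F e ≤ 1
  · exact exists_isReduction_of_not_isAcyclic htri hF hconn hodd hsimple fun h => hnt ⟨hsimple, h⟩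
  push Not at hsimple
  obtain ⟨e, he⟩ := hsimple
  induction e using Sym2.ind with
  | h u w => exact exists_isReduction_of_two_le hc0 htri hF hconn hodd he

theorem exists_isTree_le_mCost (hc0 : ∀ e, 0 ≤ c e)
    (htri : ∀ u v w : V, c s(u, v) ≤ c s(u, w) + c s(w, v)) (F : Sym2 V → ℕ) (hF : Loopless F)
    (hconn : (fromMultiset F).Connected) (hodd : ∃ v, Odd (mDeg F v)) :
    ∃ J : SimpleGraph V, J.IsTree ∧ (∀ v, Odd (treeDeg J v) ↔ Odd (mDeg F v)) ∧
      tCost c J ≤ mCost c F := by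
  by_cases htree : (∀ e, F e ≤ 1) ∧ (fromMultiset F).IsAcyclic
  · refine ⟨_, ⟨hconn, htree.2⟩, fun v => ?_, (tCost_fromMultiset c hF htree.1).le⟩
    rw [treeDeg_eq_degree, mDeg_eq_degree hF htree.1]
  obtain ⟨F', hF'⟩ := exists_isReduction hc0 htri hF hconn hodd htree
  obtain ⟨J, hJ, hdeg, hcost⟩ := exists_isTree_le_mCost hc0 htri F' hF'.loopless hF'.connected
    (hodd.imp fun v => (hF'.odd_mDeg_iff v).mpr)
  exact ⟨J, hJ, fun v => (hdeg v).trans (hF'.odd_mDeg_iff v), hcost.trans hF'.mCost_le⟩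
termination_by ∑ e, F e
decreasing_by exact hF'.sum_lt

end Main

theorem stmt2_general {V : Type*} [Fintype V]
    (c : Sym2 V → ℝ) (hc0 : ∀ e, 0 ≤ c e)
    (htri : ∀ u v w : V, c s(u, v) ≤ c s(u, w) + c s(w, v))
    (T : Finset V) (hTne : T.Nonempty)
    (F : Sym2 V → ℕ) (hsupp : ∀ e, F e ≠ 0 → ¬ e.IsDiag)
    (hconn : (fromMultiset F).Connected)
    (hjoin : ∀ v, Odd (mDeg F v) ↔ v ∈ T) :
    ∃ J : SimpleGraph V, J.IsTree ∧ (∀ v, Odd (treeDeg J v) ↔ v ∈ T) ∧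
      tCost c J ≤ mCost c F := by
  obtain ⟨t, ht⟩ := hTne
  obtain ⟨J, hJ, hdeg, hcost⟩ :=
    exists_isTree_le_mCost hc0 htri F hsupp hconn ⟨t, (hjoin t).mpr ht⟩
  exact ⟨J, hJ, fun v => (hdeg v).trans (hjoin v), hcost⟩

theorem stmt2 {V : Type*} [Fintype V] [DecidableEq V]
    (hV : 2 ≤ Fintype.card V)
    (c : Sym2 V → ℝ) (hc0 : ∀ e, 0 ≤ c e)
    (htri : ∀ u v w : V, c s(u, v) ≤ c s(u, w) + c s(w, v))
    (T : Finset V) (hTne : T.Nonempty) (hTeven : Even T.card)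
    (F : Sym2 V → ℕ) (hsupp : ∀ e, F e ≠ 0 → ¬ e.IsDiag)
    (hconn : (fromMultiset F).Connected)
    (hjoin : ∀ v, Odd (mDeg F v) ↔ v ∈ T) :
    ∃ J : SimpleGraph V, J.IsTree ∧ (∀ v, Odd (treeDeg J v) ↔ v ∈ T) ∧
      tCost c J ≤ mCost c F :=
  stmt2_general c hc0 htri T hTne F hsupp hconn hjoin
end

section
/- Let G=(V,E) be a connected undirected graph and T ⊆ V of even cardinality. Let x* : E → ℝ satisfy: x* ≥ 0; x*(δ(S)) ≥ 1 for every T-odd S ⊊ V; and x*(δ(S)) ≥ 2 for every T-even set S with ∅ ⊊ S ⊊ V. Let J be a spanning tree of G and let D be the set of wrong-degree nodes of J with respect to T (nodes of T with even degree in J and nodes of V∖T with odd degree in J). Then the vector y = (1/3)·χ(J) + (1/3)·x* is a fractional D-join, i.e., y(δ(U)) ≥ 1 for every D-odd set U ⊆ V. -/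
/-!
Let `c` be the number of tree edges leaving `U`. Then `y(δ(U)) = (c + x(δ(U))) / 3`, and counting
degrees inside `U` modulo 2 gives `c ≡ |U ∩ T| + |U ∩ D|`. In particular `|D| ≡ |T|` is even, so a
`D`-odd set `U` is a proper nonempty subset and the tree has `c ≥ 1`. If `U` is `T`-even then
`x(δ(U)) ≥ 2`; if `U` is `T`-odd then `c` is even, so `c ≥ 2`, while `x(δ(U)) ≥ 1`.
-/

open Finset
open scoped Classical

variable {V : Type*}

/-- `x(δ(U))`: the total `x`-value of the edges of `G` with exactly one endpoint in `U`. -/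
noncomputable def xCut [Fintype V] [DecidableEq V] (G : SimpleGraph V)
    (x : Sym2 V → ℝ) (U : Finset V) : ℝ :=
  ∑ u ∈ U, ∑ w ∈ Uᶜ, if G.Adj u w then x s(u, w) else 0

/-- Every edge inside `U` is counted twice. -/
lemma even_sum_sum_adj (J : SimpleGraph V) (U : Finset V) :
    Even (∑ u ∈ U, ∑ w ∈ U, if J.Adj u w then 1 else 0) := by
  induction U using Finset.induction_on with
  | empty => simp
  | @insert a s ha ih =>
    have hsymm : (∑ u ∈ s, if J.Adj u a then 1 else 0) = ∑ w ∈ s, if J.Adj a w then 1 else 0 :=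
      sum_congr rfl fun u _ => by rw [J.adj_comm]
    simp only [sum_insert ha, sum_add_distrib, SimpleGraph.irrefl, if_false, zero_add, hsymm]
    obtain ⟨r, hr⟩ := ih
    exact ⟨(∑ w ∈ s, if J.Adj a w then 1 else 0) + r, by omega⟩

lemma treeDeg_eq_sum [Fintype V] (J : SimpleGraph V) (v : V) :
    treeDeg J v = ∑ w, if J.Adj v w then 1 else 0 := by
  rw [treeDeg, Nat.card_eq_fintype_card, Fintype.card_subtype, card_filter]

section Cut

variable [Fintype V] [DecidableEq V]

noncomputable def cutCount (J : SimpleGraph V) (U : Finset V) : ℕ :=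
  ∑ u ∈ U, ∑ w ∈ Uᶜ, if J.Adj u w then 1 else 0

lemma xCut_linear_comb (G : SimpleGraph V) (a b : ℝ) (f g : Sym2 V → ℝ) (U : Finset V) :
    xCut G (fun e => a * f e + b * g e) U = a * xCut G f U + b * xCut G g U := by
  simp only [xCut, mul_sum, ← sum_add_distrib]
  refine sum_congr rfl fun u _ => sum_congr rfl fun w _ => ?_
  split_ifs <;> ring

lemma xCut_edgeSet_indicator {G J : SimpleGraph V} (hJG : J ≤ G) (U : Finset V) :
    xCut G (fun e => if e ∈ J.edgeSet then 1 else 0) U = cutCount J U := by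
  simp only [xCut, cutCount, Nat.cast_sum, Nat.cast_ite, Nat.cast_one, Nat.cast_zero,
    SimpleGraph.mem_edgeSet]
  refine sum_congr rfl fun u _ => sum_congr rfl fun w _ => ?_
  by_cases h : J.Adj u w
  · simp [h, hJG h]
  · simp [h]

lemma cutCount_univ (J : SimpleGraph V) : cutCount J univ = 0 := by
  simp [cutCount]

lemma one_le_cutCount {J : SimpleGraph V} (hJ : J.Connected) {U : Finset V} (hne : U.Nonempty)
    (hU : U ≠ univ) : 1 ≤ cutCount J U := by
  obtain ⟨a, ha⟩ := hne
  obtain ⟨b, hb⟩ : ∃ b, b ∉ U := by simpa [eq_univ_iff_forall] using hU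
  obtain ⟨d, -, hd₁, hd₂⟩ := (hJ a b).some.exists_boundary_dart U ha hb
  rw [Nat.one_le_iff_ne_zero, cutCount]
  simp only [ne_eq, sum_eq_zero_iff, mem_compl, ite_eq_right_iff, one_ne_zero, imp_false]
  exact fun h => h _ hd₁ _ hd₂ d.adj

lemma sum_treeDeg_eq (J : SimpleGraph V) (U : Finset V) :
    ∑ v ∈ U, treeDeg J v = (∑ u ∈ U, ∑ w ∈ U, if J.Adj u w then 1 else 0) + cutCount J U := by
  rw [cutCount, ← sum_add_distrib]
  exact sum_congr rfl fun v _ => by rw [treeDeg_eq_sum, sum_add_sum_compl]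

lemma cutCount_cast_zmod_two (J : SimpleGraph V) (U : Finset V) :
    (cutCount J U : ZMod 2) = ∑ v ∈ U, (treeDeg J v : ZMod 2) := by
  rw [← Nat.cast_sum, sum_treeDeg_eq, Nat.cast_add,
    (ZMod.natCast_eq_zero_iff_even).mpr (even_sum_sum_adj J U), zero_add]

variable {J : SimpleGraph V} {T D : Finset V}

lemma cutCount_cast_zmod_two_eq_card_add_card
    (hD : ∀ v, v ∈ D ↔ ((v ∈ T ∧ Even (treeDeg J v)) ∨ (v ∉ T ∧ Odd (treeDeg J v))))
    (U : Finset V) : (cutCount J U : ZMod 2) = #(U ∩ T) + #(U ∩ D) := by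
  have hdeg : ∀ v, (treeDeg J v : ZMod 2) = (if v ∈ T then 1 else 0) + (if v ∈ D then 1 else 0) := by
    intro v
    rcases Nat.even_or_odd (treeDeg J v) with h | h
    · rw [(ZMod.natCast_eq_zero_iff_even).mpr h]
      by_cases hT : v ∈ T <;> simp [hD, hT, h, Nat.not_odd_iff_even.mpr h]; decide
    · rw [(ZMod.natCast_eq_one_iff_odd).mpr h]
      by_cases hT : v ∈ T <;> simp [hD, hT, h, Nat.not_even_iff_odd.mpr h]
  rw [cutCount_cast_zmod_two, sum_congr rfl fun v _ => hdeg v, sum_add_distrib, sum_boole,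
    sum_boole, filter_mem_eq_inter, filter_mem_eq_inter]

lemma even_card_wrongDegree_of_even_card
    (hD : ∀ v, v ∈ D ↔ ((v ∈ T ∧ Even (treeDeg J v)) ∨ (v ∉ T ∧ Odd (treeDeg J v))))
    (hT : Even #T) : Even #D := by
  have h := cutCount_cast_zmod_two_eq_card_add_card hD univ
  rw [cutCount_univ, univ_inter, univ_inter, Nat.cast_zero,
    (ZMod.natCast_eq_zero_iff_even).mpr hT, zero_add, eq_comm] at h
  exact (ZMod.natCast_eq_zero_iff_even).mp h

end Cut

theorem stmt5_general {V : Type*} [Fintype V] [DecidableEq V]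
    (G : SimpleGraph V)
    (T : Finset V) (hTeven : Even T.card)
    (x : Sym2 V → ℝ) (hx0 : ∀ e ∈ G.edgeSet, 0 ≤ x e)
    (hodd : ∀ S : Finset V, S ≠ univ → Odd ((S ∩ T).card) → 1 ≤ xCut G x S)
    (heven : ∀ S : Finset V, S.Nonempty → S ≠ univ → Even ((S ∩ T).card) →
      2 ≤ xCut G x S)
    (J : SimpleGraph V) (hJG : J ≤ G) (hJtree : J.IsTree)
    (D : Finset V)
    (hD : ∀ v, v ∈ D ↔ ((v ∈ T ∧ Even (treeDeg J v)) ∨ (v ∉ T ∧ Odd (treeDeg J v)))) :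
    let y : Sym2 V → ℝ :=
      fun e => (1 / 3) * (if e ∈ J.edgeSet then 1 else 0) + (1 / 3) * x e
    (∀ e ∈ G.edgeSet, 0 ≤ y e) ∧
    (∀ U : Finset V, Odd ((U ∩ D).card) → 1 ≤ xCut G y U) := by
  intro y
  refine ⟨fun e he => ?_, fun U hUD => ?_⟩
  · have := hx0 e he
    simp only [y]
    split_ifs <;> linarith
  have hy : xCut G y U = 1 / 3 * cutCount J U + 1 / 3 * xCut G x U := by
    rw [xCut_linear_comb, xCut_edgeSet_indicator hJG]
  have hpar := cutCount_cast_zmod_two_eq_card_add_card hD U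
  have hU : U ≠ univ := by
    rintro rfl
    rw [univ_inter] at hUD
    exact Nat.not_odd_iff_even.mpr (even_card_wrongDegree_of_even_card hD hTeven) hUD
  have hne : U.Nonempty := (card_pos.mp hUD.pos).mono inter_subset_left
  have hc : 1 ≤ cutCount J U := one_le_cutCount hJtree.connected hne hU
  rcases Nat.even_or_odd #(U ∩ T) with hT | hT
  · have hc' : (1 : ℝ) ≤ cutCount J U := by exact_mod_cast hc
    linarith [heven U hne hU hT]
  · obtain ⟨r, hr⟩ : Even (cutCount J U) := by
      rw [← ZMod.natCast_eq_zero_iff_even, hpar, (ZMod.natCast_eq_one_iff_odd).mpr hT,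
        (ZMod.natCast_eq_one_iff_odd).mpr hUD]
      decide
    have hc' : (2 : ℝ) ≤ cutCount J U := by exact_mod_cast (show 2 ≤ cutCount J U by omega)
    linarith [hodd U hU hT]

theorem stmt5 {V : Type*} [Fintype V] [DecidableEq V]
    (G : SimpleGraph V) (hG : G.Connected)
    (T : Finset V) (hTeven : Even T.card)
    (x : Sym2 V → ℝ) (hx0 : ∀ e ∈ G.edgeSet, 0 ≤ x e)
    (hodd : ∀ S : Finset V, S ≠ univ → Odd ((S ∩ T).card) → 1 ≤ xCut G x S)
    (heven : ∀ S : Finset V, S.Nonempty → S ≠ univ → Even ((S ∩ T).card) →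
      2 ≤ xCut G x S)
    (J : SimpleGraph V) (hJG : J ≤ G) (hJtree : J.IsTree)
    (D : Finset V)
    (hD : ∀ v, v ∈ D ↔ ((v ∈ T ∧ Even (treeDeg J v)) ∨ (v ∉ T ∧ Odd (treeDeg J v)))) :
    let y : Sym2 V → ℝ :=
      fun e => (1 / 3) * (if e ∈ J.edgeSet then 1 else 0) + (1 / 3) * x e
    (∀ e ∈ G.edgeSet, 0 ≤ y e) ∧
    (∀ U : Finset V, Odd ((U ∩ D).card) → 1 ≤ xCut G y U) :=
  stmt5_general G T hTeven x hx0 hodd heven J hJG hJtree D hD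
end

section
/- Let G=(V,E) be a graph and T ⊆ V of even cardinality. Let x* : E → ℝ satisfy x* ≥ 0 and x*(δ(S)) ≥ 2 for every T-even set S with ∅ ⊊ S ⊊ V. Let 0 ≤ τ ≤ 1 and let R, S ⊆ V be two distinct T-odd sets that are τ-narrow, i.e., x*(δ(R)) < 1+τ and x*(δ(S)) < 1+τ. Then R and S do not cross: it is not the case that R∩S, R∪S, R∖S and S∖R are all nonempty proper subsets of V. -/
/-!
Submodularity and posimodularity of the cut function give
`x(δ(R ∩ S)) + x(δ(R ∪ S)) ≤ x(δ(R)) + x(δ(S))` and `x(δ(R \ S)) + x(δ(S \ R)) ≤ x(δ(R)) + x(δ(S))`,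
where the right-hand side is `< 2 + 2τ ≤ 4`. Since `R` and `S` are `T`-odd, one of the pairs
`{R ∩ S, R ∪ S}` and `{R \ S, S \ R}` consists of `T`-even sets; if `R` and `S` crossed, these would
be nonempty proper subsets, so their cuts would sum to at least `4`.
-/

open Finset
open scoped Classical
variable {V : Type*}

lemma ite_inter_add_ite_union_le [DecidableEq V] {a : ℝ} (ha : 0 ≤ a) (R S : Finset V) (u w : V) :
    (if u ∈ R ∩ S ∧ w ∉ R ∩ S then a else 0) + (if u ∈ R ∪ S ∧ w ∉ R ∪ S then a else 0) ≤
      (if u ∈ R ∧ w ∉ R then a else 0) + (if u ∈ S ∧ w ∉ S then a else 0) := by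
  simp only [mem_inter, mem_union]
  split_ifs <;> first | linarith | tauto

section Cut

variable [Fintype V] [DecidableEq V] (G : SimpleGraph V) (x : Sym2 V → ℝ)

lemma xCut_eq_sum_ite (U : Finset V) :
    xCut G x U = ∑ u, ∑ w, if u ∈ U ∧ w ∉ U then (if G.Adj u w then x s(u, w) else 0) else 0 := by
  simp only [xCut, ite_and, ← mem_compl, sum_ite_irrel, sum_const_zero, sum_ite_mem, univ_inter]

lemma xCut_compl (U : Finset V) : xCut G x Uᶜ = xCut G x U := by
  rw [xCut, compl_compl, sum_comm, xCut]
  refine sum_congr rfl fun u _ => sum_congr rfl fun w _ => ?_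
  rw [G.adj_comm, Sym2.eq_swap]

variable {G x}

lemma xCut_inter_add_xCut_union_le (hx0 : ∀ e ∈ G.edgeSet, 0 ≤ x e) (R S : Finset V) :
    xCut G x (R ∩ S) + xCut G x (R ∪ S) ≤ xCut G x R + xCut G x S := by
  simp only [xCut_eq_sum_ite, ← sum_add_distrib]
  refine sum_le_sum fun u _ => sum_le_sum fun w _ => ite_inter_add_ite_union_le ?_ R S u w
  split_ifs with h
  exacts [hx0 _ h, le_rfl]

lemma xCut_sdiff_add_xCut_sdiff_le (hx0 : ∀ e ∈ G.edgeSet, 0 ≤ x e) (R S : Finset V) :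
    xCut G x (R \ S) + xCut G x (S \ R) ≤ xCut G x R + xCut G x S := by
  have h := xCut_inter_add_xCut_union_le hx0 R Sᶜ
  rwa [← sdiff_eq_inter_compl, xCut_compl, ← xCut_compl G x (R ∪ Sᶜ), compl_union, compl_compl,
    inter_comm, ← sdiff_eq_inter_compl] at h

end Cut

lemma even_inter_and_even_union_or_even_sdiff_and_even_sdiff [DecidableEq V] {R S T : Finset V}
    (hR : Odd #(R ∩ T)) (hS : Odd #(S ∩ T)) :
    (Even #(R ∩ S ∩ T) ∧ Even #((R ∪ S) ∩ T)) ∨ (Even #(R \ S ∩ T) ∧ Even #(S \ R ∩ T)) := by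
  have h₁ := card_inter_add_card_union (R ∩ T) (S ∩ T)
  rw [← inter_inter_distrib_right, ← union_inter_distrib_right] at h₁
  have h₂ := card_sdiff_add_card_inter (R ∩ T) S
  have h₃ := card_sdiff_add_card_inter (S ∩ T) R
  rw [← sdiff_inter_right_comm, inter_right_comm] at h₂ h₃
  rw [inter_comm S R] at h₃
  simp only [Nat.even_iff, Nat.odd_iff] at *
  omega

theorem stmt8_general {V : Type*} [Fintype V] [DecidableEq V]
    (G : SimpleGraph V)
    (T : Finset V)
    (x : Sym2 V → ℝ) (hx0 : ∀ e ∈ G.edgeSet, 0 ≤ x e)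
    (heven : ∀ S : Finset V, S.Nonempty → S ≠ univ → Even ((S ∩ T).card) →
      2 ≤ xCut G x S)
    (τ : ℝ) (hτ1 : τ ≤ 1)
    (R S : Finset V)
    (hRodd : Odd ((R ∩ T).card)) (hSodd : Odd ((S ∩ T).card))
    (hRnarrow : xCut G x R < 1 + τ) (hSnarrow : xCut G x S < 1 + τ) :
    ¬ ((R ∩ S).Nonempty ∧ R ∩ S ≠ univ ∧ (R ∪ S).Nonempty ∧ R ∪ S ≠ univ ∧
       (R \ S).Nonempty ∧ R \ S ≠ univ ∧ (S \ R).Nonempty ∧ S \ R ≠ univ) := by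
  rintro ⟨hI, hI', hU, hU', hRS, hRS', hSR, hSR'⟩
  rcases even_inter_and_even_union_or_even_sdiff_and_even_sdiff hRodd hSodd with
    ⟨hIe, hUe⟩ | ⟨hRSe, hSRe⟩
  · linarith [xCut_inter_add_xCut_union_le hx0 R S, heven _ hI hI' hIe, heven _ hU hU' hUe]
  · linarith [xCut_sdiff_add_xCut_sdiff_le hx0 R S, heven _ hRS hRS' hRSe, heven _ hSR hSR' hSRe]

theorem stmt8 {V : Type*} [Fintype V] [DecidableEq V]
    (G : SimpleGraph V)
    (T : Finset V) (hTeven : Even T.card)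
    (x : Sym2 V → ℝ) (hx0 : ∀ e ∈ G.edgeSet, 0 ≤ x e)
    (heven : ∀ S : Finset V, S.Nonempty → S ≠ univ → Even ((S ∩ T).card) →
      2 ≤ xCut G x S)
    (τ : ℝ) (hτ0 : 0 ≤ τ) (hτ1 : τ ≤ 1)
    (R S : Finset V) (hRS : R ≠ S)
    (hRodd : Odd ((R ∩ T).card)) (hSodd : Odd ((S ∩ T).card))
    (hRnarrow : xCut G x R < 1 + τ) (hSnarrow : xCut G x S < 1 + τ) :
    ¬ ((R ∩ S).Nonempty ∧ R ∩ S ≠ univ ∧ (R ∪ S).Nonempty ∧ R ∪ S ≠ univ ∧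
       (R \ S).Nonempty ∧ R \ S ≠ univ ∧ (S \ R).Nonempty ∧ S \ R ≠ univ) :=
  stmt8_general G T x hx0 heven τ hτ1 R S hRodd hSodd hRnarrow hSnarrow
end

section
/- Let J be a tree with vertex set V, let T ⊆ V be of even cardinality, and let D be the wrong-degree set of J with respect to T (nodes of T with even degree in J and nodes of V∖T with odd degree in J). Let Q ⊆ V be a T-odd set with ∅ ⊊ Q ⊊ V. Then there exists an edge e ∈ δ_J(Q) such that the two connected components of J − e each contain an even number of nodes of D; in particular, δ_J(Q) strictly contains δ_{M'}(Q) for any D-join M′ consisting of edges of J each used at most once. -/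
/-!
Counting incidences modulo 2 (the handshake lemma on a vertex set S) gives
|δ_J(S)| ≡ |S ∩ D| + |S ∩ T| for every S ⊆ V, and |δ_M(S)| ≡ |S ∩ D| for a D-join M.
For T-odd Q the two counts differ, so δ_M(Q) ⊊ δ_J(Q) when M ⊆ J.

In the tree J, removing an edge ab leaves the side C of a with δ_J(C) = {ab}. Summing the
indicators (in ZMod 2) of the a-sides of all edges ab of δ_J(Q) with a ∈ Q gives a function that,
like the indicator of Q, changes exactly across the edges of δ_J(Q); hence the two differ by a
constant. Summing over T, where |T| is even and |Q ∩ T| odd, shows that some such side C is T-odd.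
Then |C ∩ D| ≡ 1 + 1 is even, and so is |D \ C|, because |D| ≡ |T| is even.
-/

open Finset
open scoped Classical

section EdgeBoundary

variable {V : Type*} [DecidableEq V]

def IsJoin (M : Finset (Sym2 V)) (D : Finset V) : Prop :=
  ∀ v, Odd (M.filter (v ∈ ·)).card ↔ v ∈ D

-- `Fintype V` decides the existentials below, exactly as in the filters of the theorem.
variable [Fintype V]

def edgeBoundary (M : Finset (Sym2 V)) (S : Finset V) : Finset (Sym2 V) :=
  M.filter fun e => (∃ u ∈ e, u ∈ S) ∧ ∃ w ∈ e, w ∉ S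

lemma edgeBoundary_mono {M N : Finset (Sym2 V)} (h : M ⊆ N) (S : Finset V) :
    edgeBoundary M S ⊆ edgeBoundary N S :=
  filter_subset_filter _ h

lemma mk_mem_edgeBoundary_iff {M : Finset (Sym2 V)} {S : Finset V} {x y : V} :
    s(x, y) ∈ edgeBoundary M S ↔ s(x, y) ∈ M ∧ (x ∈ S ↔ y ∉ S) := by
  simp only [edgeBoundary, mem_filter, Sym2.mem_iff]
  grind

lemma cast_card_filter_mem_sym2 (S : Finset V) {e : Sym2 V} (he : ¬e.IsDiag) :
    ((S.filter (· ∈ e)).card : ZMod 2) =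
      if (∃ u ∈ e, u ∈ S) ∧ ∃ w ∈ e, w ∉ S then 1 else 0 := by
  induction e with
  | _ x y =>
    rw [Sym2.mk_isDiag_iff] at he
    have : S.filter (· ∈ s(x, y)) = S.filter (· = x) ∪ S.filter (· = y) := by
      rw [← filter_or]; simp only [Sym2.mem_iff]
    rw [this, filter_eq', filter_eq']
    by_cases hx : x ∈ S <;> by_cases hy : y ∈ S <;>
      simp [hx, hy, he, Sym2.mem_iff, CharTwo.two_eq_zero]

lemma sum_cast_card_incident_eq_card_edgeBoundary {M : Finset (Sym2 V)}
    (hM : ∀ e ∈ M, ¬e.IsDiag) (S : Finset V) :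
    ∑ v ∈ S, ((M.filter (v ∈ ·)).card : ZMod 2) = (edgeBoundary M S).card := by
  calc ∑ v ∈ S, ((M.filter (v ∈ ·)).card : ZMod 2)
      = ∑ e ∈ M, ((S.filter (· ∈ e)).card : ZMod 2) := by
        simp_rw [← sum_boole]; exact sum_comm
    _ = ∑ e ∈ M, if (∃ u ∈ e, u ∈ S) ∧ ∃ w ∈ e, w ∉ S then 1 else 0 :=
      sum_congr rfl fun e he => cast_card_filter_mem_sym2 S (hM e he)
    _ = (edgeBoundary M S).card := sum_boole _ _

end EdgeBoundary

lemma natCast_zmod_two_eq_ite_odd (n : ℕ) : (n : ZMod 2) = if Odd n then 1 else 0 := by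
  split_ifs with h
  · exact ZMod.natCast_eq_one_iff_odd.mpr h
  · exact ZMod.natCast_eq_zero_iff_even.mpr (Nat.not_odd_iff_even.mp h)

namespace SimpleGraph

variable {V : Type*} {G : SimpleGraph V}

lemma Preconnected.apply_eq_of_forall_adj {α : Type*} (hG : G.Preconnected) {f : V → α}
    (hf : ∀ x y, G.Adj x y → f x = f y) (u v : V) : f u = f v := by
  obtain ⟨p⟩ := hG u v
  induction p with
  | nil => rfl
  | cons h _ ih => exact (hf _ _ h).trans ih

variable [Fintype V] [DecidableRel G.Adj]

variable (G) in
def IsWrongDegreeSet (T D : Finset V) : Prop :=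
  ∀ v, v ∈ D ↔ (v ∈ T ∧ Even (G.degree v)) ∨ (v ∉ T ∧ Odd (G.degree v))

variable [DecidableEq V]

lemma sum_cast_degree_eq_card_edgeBoundary (S : Finset V) :
    ∑ v ∈ S, (G.degree v : ZMod 2) = (edgeBoundary G.edgeFinset S).card := by
  simp_rw [← card_incidenceFinset_eq_degree, incidenceFinset_eq_filter]
  exact sum_cast_card_incident_eq_card_edgeBoundary
    (fun e he => G.not_isDiag_of_mem_edgeSet (mem_edgeFinset.mp he)) S

variable (G) in
def side (a b : V) : Finset V :=
  univ.filter fun v => (G.deleteEdges {s(a, b)}).Reachable a v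

lemma self_mem_side (a b : V) : a ∈ G.side a b := by
  simp [side]

lemma mem_side_iff_of_adj {a b x y : V} (hxy : G.Adj x y) (hne : s(x, y) ≠ s(a, b)) :
    x ∈ G.side a b ↔ y ∈ G.side a b := by
  have hadj : (G.deleteEdges {s(a, b)}).Adj x y := by simp [hxy, hne]
  simp only [side, mem_filter, mem_univ, true_and]
  exact ⟨fun h => h.trans hadj.reachable, fun h => h.trans hadj.symm.reachable⟩

lemma IsAcyclic.notMem_side (hG : G.IsAcyclic) {a b : V} (hab : G.Adj a b) :
    b ∉ G.side a b := by
  simpa [side] using isBridge_iff.mp (isAcyclic_iff_forall_adj_isBridge.mp hG hab)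

lemma Connected.mem_side_or_mem_side_swap (hG : G.Connected) {a b : V} (hab : G.Adj a b)
    (v : V) : v ∈ G.side a b ∨ v ∈ G.side b a := by
  refine (hG.preconnected.apply_eq_of_forall_adj
    (f := fun v => v ∈ G.side a b ∨ v ∈ G.side b a) (fun x y hxy => ?_) a v).mp
    (.inl (self_mem_side a b))
  by_cases hne : s(x, y) = s(a, b)
  · rcases Sym2.eq_iff.mp hne with ⟨rfl, rfl⟩ | ⟨rfl, rfl⟩ <;>
      simp [self_mem_side]
  · rw [mem_side_iff_of_adj hxy hne, mem_side_iff_of_adj hxy (Sym2.eq_swap (a := a) ▸ hne)]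

lemma IsTree.side_swap (hG : G.IsTree) {a b : V} (hab : G.Adj a b) :
    G.side b a = (G.side a b)ᶜ := by
  ext v
  refine ⟨fun hb => mem_compl.mpr fun ha => hG.isAcyclic.notMem_side hab ?_,
    fun hv => (hG.connected.mem_side_or_mem_side_swap hab v).resolve_left (mem_compl.mp hv)⟩
  simp only [side, mem_filter, mem_univ, true_and, Sym2.eq_swap (a := b)] at ha hb ⊢
  exact ha.trans hb.symm

lemma IsAcyclic.edgeBoundary_side (hG : G.IsAcyclic) {a b : V}
    (hab : G.Adj a b) : edgeBoundary G.edgeFinset (G.side a b) = {s(a, b)} := by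
  ext e
  induction e with
  | _ x y =>
    rw [mk_mem_edgeBoundary_iff, mem_edgeFinset, mem_edgeSet, mem_singleton]
    by_cases hne : s(x, y) = s(a, b)
    · rcases Sym2.eq_iff.mp hne with ⟨rfl, rfl⟩ | ⟨rfl, rfl⟩ <;>
        simp [hab, hab.symm, self_mem_side, hG.notMem_side hab]
    · simp only [hne, iff_false, not_and]
      intro hxy
      rw [mem_side_iff_of_adj hxy hne]
      tauto

lemma IsAcyclic.ite_mem_side_add_ite_mem_side (hG : G.IsAcyclic) {a b x y : V}
    (hab : G.Adj a b) (hxy : G.Adj x y) :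
    ((if x ∈ G.side a b then 1 else 0) + if y ∈ G.side a b then 1 else 0 : ZMod 2) =
      (if (a, b) = (x, y) then 1 else 0) + if (a, b) = (y, x) then 1 else 0 := by
  by_cases hne : s(x, y) = s(a, b)
  · rcases Sym2.eq_iff.mp hne with ⟨rfl, rfl⟩ | ⟨rfl, rfl⟩ <;>
      simp [self_mem_side, hG.notMem_side hab, hab.ne, hab.ne.symm]
  · have hxy' : (a, b) ≠ (x, y) := by rintro ⟨⟩; exact hne rfl
    have hyx' : (a, b) ≠ (y, x) := by rintro ⟨⟩; exact hne Sym2.eq_swap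
    simp only [mem_side_iff_of_adj hxy hne, if_neg hxy', if_neg hyx', CharTwo.add_self_eq_zero]

theorem IsTree.exists_adj_odd_card_side_inter (hG : G.IsTree) {T Q : Finset V}
    (hT : Even T.card) (hQ : Odd (Q ∩ T).card) :
    ∃ a b, a ∈ Q ∧ b ∉ Q ∧ G.Adj a b ∧ Odd (G.side a b ∩ T).card := by
  let χ (S : Finset V) (v : V) : ZMod 2 := if v ∈ S then 1 else 0
  let P := univ.filter fun p : V × V => G.Adj p.1 p.2 ∧ p.1 ∈ Q ∧ p.2 ∉ Q
  let g (v : V) : ZMod 2 := ∑ p ∈ P, χ (G.side p.1 p.2) v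
  have hg_adj : ∀ x y, G.Adj x y → g x + g y = χ Q x + χ Q y := by
    intro x y hxy
    calc g x + g y
        = ∑ p ∈ P, ((if p = (x, y) then 1 else 0) + if p = (y, x) then 1 else 0) := by
          rw [← sum_add_distrib]
          exact sum_congr rfl fun p hp =>
            hG.isAcyclic.ite_mem_side_add_ite_mem_side (mem_filter.mp hp).2.1 hxy
      _ = χ Q x + χ Q y := by
          rw [sum_add_distrib, sum_ite_eq', sum_ite_eq']
          by_cases hx : x ∈ Q <;> by_cases hy : y ∈ Q <;>
            simp [P, χ, hxy, hxy.symm, hx, hy, CharTwo.add_self_eq_zero]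
  obtain ⟨c, hc⟩ : ∃ c, ∀ v, g v = c + χ Q v := by
    obtain ⟨v₀⟩ := hG.connected.nonempty
    refine ⟨g v₀ + χ Q v₀, fun v => CharTwo.add_eq_iff_eq_add.mp ?_⟩
    refine hG.connected.preconnected.apply_eq_of_forall_adj (f := fun v => g v + χ Q v)
      (fun x y hxy => ?_) v v₀
    have := hg_adj x y hxy
    grind
  have hsum : ∑ p ∈ P, ((G.side p.1 p.2 ∩ T).card : ZMod 2) = 1 := by
    calc ∑ p ∈ P, ((G.side p.1 p.2 ∩ T).card : ZMod 2)
        = ∑ v ∈ T, g v := by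
          simp_rw [g, χ, sum_comm (s := T), sum_boole, filter_mem_eq_inter, inter_comm T]
      _ = T.card • c + (Q ∩ T).card := by
          simp_rw [hc, sum_add_distrib, sum_const, χ, sum_boole, filter_mem_eq_inter, inter_comm]
      _ = 1 := by
          rw [nsmul_eq_mul, ZMod.natCast_eq_zero_iff_even.mpr hT,
            ZMod.natCast_eq_one_iff_odd.mpr hQ, zero_mul, zero_add]
  obtain ⟨⟨a, b⟩, hp, hodd⟩ := exists_ne_zero_of_sum_ne_zero (hsum ▸ one_ne_zero)
  obtain ⟨-, hab, ha, hb⟩ := mem_filter.mp hp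
  exact ⟨a, b, ha, hb, hab, ZMod.natCast_ne_zero_iff_odd.mp hodd⟩

variable {T D : Finset V}

lemma IsWrongDegreeSet.cast_card_edgeBoundary (hD : G.IsWrongDegreeSet T D) (S : Finset V) :
    ((edgeBoundary G.edgeFinset S).card : ZMod 2) = (S ∩ D).card + (S ∩ T).card := by
  rw [← sum_cast_degree_eq_card_edgeBoundary, ← filter_mem_eq_inter, ← filter_mem_eq_inter,
    ← sum_boole, ← sum_boole, ← sum_add_distrib]
  refine sum_congr rfl fun v _ => ?_
  rw [natCast_zmod_two_eq_ite_odd]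
  by_cases hT : v ∈ T <;> by_cases hdeg : Even (G.degree v) <;>
    simp [hD v, hT, hdeg, ← Nat.not_even_iff_odd, CharTwo.add_self_eq_zero]

lemma IsWrongDegreeSet.even_card (hD : G.IsWrongDegreeSet T D)
    (hT : Even T.card) : Even D.card := by
  have h := hD.cast_card_edgeBoundary univ
  have hempty : edgeBoundary G.edgeFinset univ = ∅ := by simp [edgeBoundary]
  rw [hempty, univ_inter, univ_inter, ZMod.natCast_eq_zero_iff_even.mpr hT, add_zero] at h
  exact ZMod.natCast_eq_zero_iff_even.mp (by simpa using h.symm)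

lemma IsTree.even_card_side_inter_of_isWrongDegreeSet (hG : G.IsTree)
    (hD : G.IsWrongDegreeSet T D) (hT : Even T.card) {a b : V} (hab : G.Adj a b)
    (hodd : Odd (G.side a b ∩ T).card) :
    Even (G.side a b ∩ D).card ∧ Even (G.side b a ∩ D).card := by
  have hside : Even (G.side a b ∩ D).card := by
    have h := hD.cast_card_edgeBoundary (G.side a b)
    rw [hG.isAcyclic.edgeBoundary_side hab, card_singleton, Nat.cast_one,
      ZMod.natCast_eq_one_iff_odd.mpr hodd, right_eq_add] at h
    exact ZMod.natCast_eq_zero_iff_even.mp h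
  refine ⟨hside, ?_⟩
  have hsplit := card_sdiff_add_card_inter D (G.side a b)
  rw [hG.side_swap hab, inter_comm, ← sdiff_eq_inter_compl]
  rw [inter_comm] at hside
  exact (Nat.even_add.mp (hsplit ▸ hD.even_card hT)).mpr hside

lemma IsWrongDegreeSet.edgeBoundary_ssubset_of_isJoin (hD : G.IsWrongDegreeSet T D)
    {Q : Finset V} (hQ : Odd (Q ∩ T).card) {M : Finset (Sym2 V)}
    (hMG : ∀ e ∈ M, e ∈ G.edgeSet) (hMD : IsJoin M D) :
    edgeBoundary M Q ⊂ edgeBoundary G.edgeFinset Q := by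
  refine Finset.ssubset_iff_subset_ne.mpr
    ⟨edgeBoundary_mono (fun e he => mem_edgeFinset.mpr (hMG e he)) Q, fun h => ?_⟩
  have hM : ((edgeBoundary M Q).card : ZMod 2) = (Q ∩ D).card := by
    rw [← sum_cast_card_incident_eq_card_edgeBoundary
      (fun e he => G.not_isDiag_of_mem_edgeSet (hMG e he)), ← filter_mem_eq_inter, ← sum_boole]
    exact sum_congr rfl fun v _ =>
      (natCast_zmod_two_eq_ite_odd _).trans (if_congr (hMD v) rfl rfl)
  have hcut := hD.cast_card_edgeBoundary Q
  rw [← h, hM, ZMod.natCast_eq_one_iff_odd.mpr hQ, left_eq_add] at hcut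
  exact one_ne_zero hcut

end SimpleGraph

theorem stmt16_general {V : Type*} [Fintype V] [DecidableEq V]
    (J : SimpleGraph V) [DecidableRel J.Adj] (hJ : J.IsTree)
    (T : Finset V) (hTeven : Even T.card)
    (D : Finset V)
    (hD : ∀ v, v ∈ D ↔ ((v ∈ T ∧ Even (J.degree v)) ∨ (v ∉ T ∧ Odd (J.degree v))))
    (Q : Finset V)
    (hQodd : Odd ((Q ∩ T).card)) :
    -- there is an edge of δ_J(Q) whose removal leaves two D-even components
    (∃ a b : V, a ∈ Q ∧ b ∉ Q ∧ J.Adj a b ∧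
      Even (((univ.filter (fun v => (J.deleteEdges {s(a, b)}).Reachable a v)) ∩ D).card) ∧
      Even (((univ.filter (fun v => (J.deleteEdges {s(a, b)}).Reachable b v)) ∩ D).card)) ∧
    -- in particular, δ_{M'}(Q) is a proper subset of δ_J(Q) for any D-join M'
    -- consisting of edges of J, each used at most once
    (∀ M : Finset (Sym2 V), (∀ e ∈ M, e ∈ J.edgeSet) →
      (∀ v, (Odd ((M.filter (fun e => v ∈ e)).card) ↔ v ∈ D)) →
      M.filter (fun e => (∃ u ∈ e, u ∈ Q) ∧ (∃ w ∈ e, w ∉ Q)) ⊂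
        J.edgeFinset.filter (fun e => (∃ u ∈ e, u ∈ Q) ∧ (∃ w ∈ e, w ∉ Q))) := by
  refine ⟨?_, fun M hMJ hMD => SimpleGraph.IsWrongDegreeSet.edgeBoundary_ssubset_of_isJoin
    hD hQodd hMJ hMD⟩
  obtain ⟨a, b, ha, hb, hab, hodd⟩ := hJ.exists_adj_odd_card_side_inter hTeven hQodd
  obtain ⟨hCa, hCb⟩ := hJ.even_card_side_inter_of_isWrongDegreeSet hD hTeven hab hodd
  refine ⟨a, b, ha, hb, hab, hCa, ?_⟩
  rwa [SimpleGraph.side, Sym2.eq_swap] at hCb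

theorem stmt16 {V : Type*} [Fintype V] [DecidableEq V]
    (J : SimpleGraph V) [DecidableRel J.Adj] (hJ : J.IsTree)
    (T : Finset V) (hTeven : Even T.card)
    (D : Finset V)
    (hD : ∀ v, v ∈ D ↔ ((v ∈ T ∧ Even (J.degree v)) ∨ (v ∉ T ∧ Odd (J.degree v))))
    (Q : Finset V) (hQne : Q.Nonempty) (hQuniv : Q ≠ univ)
    (hQodd : Odd ((Q ∩ T).card)) :
    -- there is an edge of δ_J(Q) whose removal leaves two D-even components
    (∃ a b : V, a ∈ Q ∧ b ∉ Q ∧ J.Adj a b ∧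
      Even (((univ.filter (fun v => (J.deleteEdges {s(a, b)}).Reachable a v)) ∩ D).card) ∧
      Even (((univ.filter (fun v => (J.deleteEdges {s(a, b)}).Reachable b v)) ∩ D).card)) ∧
    -- in particular, δ_{M'}(Q) is a proper subset of δ_J(Q) for any D-join M'
    -- consisting of edges of J, each used at most once
    (∀ M : Finset (Sym2 V), (∀ e ∈ M, e ∈ J.edgeSet) →
      (∀ v, (Odd ((M.filter (fun e => v ∈ e)).card) ↔ v ∈ D)) →
      M.filter (fun e => (∃ u ∈ e, u ∈ Q) ∧ (∃ w ∈ e, w ∉ Q)) ⊂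
        J.edgeFinset.filter (fun e => (∃ u ∈ e, u ∈ Q) ∧ (∃ w ∈ e, w ∉ Q))) :=
  stmt16_general J hJ T hTeven D hD Q hQodd
end

section
/- Let G=(V,E) be a graph, let T ⊆ V be nonempty of even cardinality with a designated root t* ∈ T, let I ⊆ V∖T, and let F be a connected T-join of the graph G∖I (the induced subgraph on V∖I). Then for every T-even set R with ∅ ⊊ R ⊆ V∖{t*} such that R ⊄ I, the number |δ_F(R)| of edges of F (counted with multiplicity) with exactly one endpoint in R is even and at least 2; and for every T-odd set Q ⊆ V∖{t*}, |δ_F(Q)| ≥ 1. In particular, the integral vector (x,Z) with x_e the multiplicity of e in F, Z_I = 1 and Z_X = 0 for X ≠ I is feasible for the prize-collecting LP (L.P.3). -/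
open Finset
open scoped Classical

variable {V : Type*}

/-!
Counting edge ends inside `R` gives `∑_{v ∈ R} deg_F v = 2 · (edges of F inside R) + |δ_F(R)|`
for a loopless `F`, so `|δ_F(R)|` has the parity of the number of odd-degree vertices in `R`,
which for a `T`-join is `|R ∩ T|`. A set avoiding `t*` that meets `V ∖ I` contains a vertex
joined to `t*` by a walk of `F`, and that walk leaves the set, so the cut is nonempty.
-/

theorem Finset.even_sum_sum_of_symm_of_diag_eq_zero {ι : Type*} (f : ι → ι → ℕ)
    (hsymm : ∀ u w, f u w = f w u) (hdiag : ∀ u, f u u = 0) (R : Finset ι) :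
    Even (∑ u ∈ R, ∑ w ∈ R, f u w) := by
  classical
  induction R using Finset.induction_on with
  | empty => simp
  | insert a R ha ih =>
    have hsplit : ∑ u ∈ insert a R, ∑ w ∈ insert a R, f u w =
        2 * ∑ w ∈ R, f a w + ∑ u ∈ R, ∑ w ∈ R, f u w := by
      simp only [sum_insert ha, sum_add_distrib, hdiag, hsymm _ a]
      ring
    rw [hsplit]
    exact (even_two_mul _).add ih

section Cuts

variable [Fintype V] [DecidableEq V]

theorem sum_mDeg_eq_add_mCut (F : Sym2 V → ℕ) (R : Finset V) :
    ∑ v ∈ R, mDeg F v = ∑ u ∈ R, ∑ w ∈ R, F s(u, w) + mCut F R := by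
  rw [mCut, ← sum_add_distrib]
  exact sum_congr rfl fun u _ => (sum_add_sum_compl R _).symm

theorem even_mCut_iff (F : Sym2 V → ℕ) (hloop : ∀ v, F s(v, v) = 0) (R : Finset V) :
    Even (mCut F R) ↔ Even #{v ∈ R | Odd (mDeg F v)} := by
  have hinner : Even (∑ u ∈ R, ∑ w ∈ R, F s(u, w)) :=
    even_sum_sum_of_symm_of_diag_eq_zero _ (fun u w => by rw [Sym2.eq_swap]) hloop R
  rw [← even_sum_iff_even_card_odd, sum_mDeg_eq_add_mCut, Nat.even_add]
  exact ⟨fun h => iff_of_true hinner h, fun h => h.mp hinner⟩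

theorem even_mCut_iff_even_card_inter (F : Sym2 V → ℕ) (hloop : ∀ v, F s(v, v) = 0)
    {T : Finset V} (hjoin : ∀ v, Odd (mDeg F v) ↔ v ∈ T) (R : Finset V) :
    Even (mCut F R) ↔ Even #(R ∩ T) := by
  rw [even_mCut_iff F hloop, ← filter_mem_eq_inter]
  simp only [hjoin]

theorem le_mCut (F : Sym2 V → ℕ) {R : Finset V} {a b : V} (ha : a ∈ R) (hb : b ∉ R) :
    F s(a, b) ≤ mCut F R :=
  calc F s(a, b) ≤ ∑ w ∈ Rᶜ, F s(a, w) :=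
        single_le_sum (f := fun w => F s(a, w)) (fun _ _ => Nat.zero_le _) (mem_compl.mpr hb)
    _ ≤ mCut F R := single_le_sum (f := fun u => ∑ w ∈ Rᶜ, F s(u, w)) (fun _ _ => Nat.zero_le _) ha

theorem one_le_mCut_of_reachable (F : Sym2 V → ℕ) {R : Finset V} {v t : V}
    (hvt : (fromMultiset F).Reachable v t) (hv : v ∈ R) (ht : t ∉ R) : 1 ≤ mCut F R := by
  obtain ⟨p⟩ := hvt
  obtain ⟨d, -, hd, hd'⟩ := p.exists_boundary_dart (R : Set V) hv ht
  exact (Nat.one_le_iff_ne_zero.mpr d.adj.2).trans (le_mCut F hd hd')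

end Cuts

theorem stmt17_general {V : Type*} [Fintype V] [DecidableEq V]
    (G : SimpleGraph V)
    (T : Finset V)
    (tstar : V) (htstar : tstar ∈ T)
    (I : Finset V) (hIT : Disjoint I T)
    (F : Sym2 V → ℕ)
    -- F is a multiset of edges of the induced subgraph G \ I
    (hsupp : ∀ e, F e ≠ 0 → e ∈ G.edgeSet ∧ ∀ v ∈ e, v ∉ I)
    -- F is spanning and connected on V \ I
    (hconn : ∀ u ∉ I, ∀ w ∉ I, (fromMultiset F).Reachable u w)
    -- F is a T-join
    (hjoin : ∀ v, Odd (mDeg F v) ↔ v ∈ T) :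
    -- each nonempty T-even R ⊆ V \ {t*} not contained in I has even cut of size ≥ 2
    (∀ R : Finset V, R.Nonempty → R ⊆ univ.erase tstar → Even ((R ∩ T).card) →
      ¬ R ⊆ I → Even (mCut F R) ∧ 2 ≤ mCut F R) ∧
    -- each T-odd Q ⊆ V \ {t*} has cut of size ≥ 1
    (∀ Q : Finset V, Q ⊆ univ.erase tstar → Odd ((Q ∩ T).card) → 1 ≤ mCut F Q) ∧
    -- in particular, (x, Z) with x the multiplicity vector of F, Z_I = 1 and
    -- Z_X = 0 for X ≠ I is feasible for (L.P.3)
    (∀ R : Finset V, R.Nonempty → R ⊆ univ.erase tstar → Even ((R ∩ T).card) →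
      2 ≤ (mCut F R : ℝ) + 2 * (if R ⊆ I then 1 else 0)) := by
  have hloop (v : V) : F s(v, v) = 0 :=
    not_not.mp fun h => G.irrefl (hsupp _ h).1
  have hparity := even_mCut_iff_even_card_inter F hloop hjoin
  have hpos (R : Finset V) (hR : R ⊆ univ.erase tstar) (hRI : ¬ R ⊆ I) : 1 ≤ mCut F R := by
    obtain ⟨v, hvR, hvI⟩ := not_subset.mp hRI
    have htI : tstar ∉ I := fun h => disjoint_left.mp hIT h htstar
    exact one_le_mCut_of_reachable F (hconn v hvI tstar htI) hvR
      fun h => (mem_erase.mp (hR h)).1 rfl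
  have heven : ∀ R : Finset V, R.Nonempty → R ⊆ univ.erase tstar → Even #(R ∩ T) →
      ¬ R ⊆ I → Even (mCut F R) ∧ 2 ≤ mCut F R := by
    intro R _ hR hev hRI
    have hcut := (hparity R).mpr hev
    have hpos' := hpos R hR hRI
    exact ⟨hcut, by obtain ⟨k, hk⟩ := hcut; omega⟩
  refine ⟨heven, fun Q _ hodd => ?_, fun R hne hR hev => ?_⟩
  · have hcut : Odd (mCut F Q) := by
      rwa [← Nat.not_even_iff_odd, hparity, Nat.not_even_iff_odd]
    exact hcut.pos
  · split_ifs with hRI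
    · norm_num
    · have hcut : (2 : ℝ) ≤ mCut F R := mod_cast (heven R hne hR hev hRI).2
      simpa using hcut

theorem stmt17 {V : Type*} [Fintype V] [DecidableEq V]
    (G : SimpleGraph V)
    (T : Finset V) (hTne : T.Nonempty) (hTeven : Even T.card)
    (tstar : V) (htstar : tstar ∈ T)
    (I : Finset V) (hIT : Disjoint I T)
    (F : Sym2 V → ℕ)
    -- F is a multiset of edges of the induced subgraph G \ I
    (hsupp : ∀ e, F e ≠ 0 → e ∈ G.edgeSet ∧ ∀ v ∈ e, v ∉ I)
    -- F is spanning and connected on V \ I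
    (hconn : ∀ u ∉ I, ∀ w ∉ I, (fromMultiset F).Reachable u w)
    -- F is a T-join
    (hjoin : ∀ v, Odd (mDeg F v) ↔ v ∈ T) :
    -- each nonempty T-even R ⊆ V \ {t*} not contained in I has even cut of size ≥ 2
    (∀ R : Finset V, R.Nonempty → R ⊆ univ.erase tstar → Even ((R ∩ T).card) →
      ¬ R ⊆ I → Even (mCut F R) ∧ 2 ≤ mCut F R) ∧
    -- each T-odd Q ⊆ V \ {t*} has cut of size ≥ 1
    (∀ Q : Finset V, Q ⊆ univ.erase tstar → Odd ((Q ∩ T).card) → 1 ≤ mCut F Q) ∧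
    -- in particular, (x, Z) with x the multiplicity vector of F, Z_I = 1 and
    -- Z_X = 0 for X ≠ I is feasible for (L.P.3)
    (∀ R : Finset V, R.Nonempty → R ⊆ univ.erase tstar → Even ((R ∩ T).card) →
      2 ≤ (mCut F R : ℝ) + 2 * (if R ⊆ I then 1 else 0)) :=
  stmt17_general G T tstar htstar I hIT F hsupp hconn hjoin
end

section
/- Let H be a tree whose vertex set is partitioned into a set A of 'active' vertices and a set B of 'inactive' vertices, where every vertex of B, except possibly one, has degree at least 2 in H. Then the sum of the degrees of the active vertices satisfies ∑_{v∈A} deg_H(v) ≤ 2|A| − 1. Consequently, if moreover A is partitioned into 𝓒 and 𝓒̂ with |𝓒| ≤ |T|−1 for some integer |T| ≥ 2, then ∑_{v∈𝓒} deg_H(v) + ∑_{v∈𝓒̂} deg_H(v) ≤ (2 − 1/(|T|−1))·|𝓒| + 2|𝓒̂|. -/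
/-! In a tree the degrees sum to `2|V| - 2`. The vertices outside `A` contribute at least
`2|Aᶜ| - 1` (the exceptional vertex still has degree `≥ 1` once the tree has an active vertex
besides it), which leaves at most `2|A| - 1` for `A`. The second bound then only uses
`|𝓒| / (m - 1) ≤ 1`. -/

open Finset

lemma Finset.two_mul_card_le_sum_add_one {α : Type*} [DecidableEq α] {s : Finset α}
    {f : α → ℕ} (w : α) (hs : ∀ v ∈ s, v ≠ w → 2 ≤ f v) (hw : w ∈ s → 1 ≤ f w) :
    2 * #s ≤ ∑ v ∈ s, f v + 1 := by
  by_cases hws : w ∈ s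
  · have hrest : #(s.erase w) • 2 ≤ ∑ v ∈ s.erase w, f v :=
      card_nsmul_le_sum _ _ _ fun v hv => hs v (mem_of_mem_erase hv) (ne_of_mem_erase hv)
    rw [← add_sum_erase _ _ hws]
    rw [card_erase_of_mem hws, smul_eq_mul] at hrest
    have hs_pos := card_pos.mpr ⟨w, hws⟩
    have hw_pos := hw hws
    omega
  · have hall : #s • 2 ≤ ∑ v ∈ s, f v :=
      card_nsmul_le_sum _ _ _ fun v hv => hs v hv (ne_of_mem_of_not_mem hv hws)
    rw [smul_eq_mul] at hall
    omega

lemma Nat.cast_le_two_sub_one_div_mul_add {s c h m : ℕ} (hs : s ≤ 2 * (c + h) - 1)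
    (hm : 2 ≤ m) (hc : c ≤ m - 1) :
    (s : ℝ) ≤ (2 - 1 / ((m : ℝ) - 1)) * c + 2 * h := by
  obtain rfl | hc0 := c.eq_zero_or_pos
  · simp only [CharP.cast_eq_zero, mul_zero, zero_add]
    exact_mod_cast (by omega : s ≤ 2 * h)
  have hm1 : (1 : ℝ) ≤ m - 1 := by
    have : (2 : ℝ) ≤ m := by exact_mod_cast hm
    linarith
  have hcm : (c : ℝ) ≤ m - 1 := by
    have : ((c + 1 : ℕ) : ℝ) ≤ m := by exact_mod_cast (by omega : c + 1 ≤ m)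
    push_cast at this
    linarith
  have hfrac : (c : ℝ) / (m - 1) ≤ 1 := (div_le_one₀ (by linarith)).mpr hcm
  have hs' : (s : ℝ) + 1 ≤ 2 * c + 2 * h := by exact_mod_cast (by omega : s + 1 ≤ 2 * c + 2 * h)
  rw [sub_mul, one_div_mul_eq_div]
  linarith

namespace SimpleGraph

variable {V : Type*} [Fintype V] {G : SimpleGraph V} [DecidableRel G.Adj]

lemma IsTree.sum_degrees_add_two (hG : G.IsTree) :
    ∑ v, G.degree v + 2 = 2 * Fintype.card V := by
  rw [G.sum_degrees_eq_twice_card_edges, ← hG.card_edgeFinset]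
  ring

lemma IsTree.sum_degree_le [DecidableEq V] (hG : G.IsTree) (A : Finset V) (w : V)
    (hdeg : ∀ v ∈ Aᶜ, v ≠ w → 2 ≤ G.degree v) :
    ∑ v ∈ A, G.degree v ≤ 2 * #A - 1 := by
  obtain rfl | ⟨a, ha⟩ := A.eq_empty_or_nonempty
  · simp
  have hw : w ∈ Aᶜ → 1 ≤ G.degree w := fun hw =>
    (hG.connected.preconnected w a).degree_pos_left (by rintro rfl; simp_all)
  have hcompl := two_mul_card_le_sum_add_one w hdeg hw
  have hsplit := A.sum_add_sum_compl fun v => G.degree v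
  have hcard := A.card_add_card_compl
  have htotal := hG.sum_degrees_add_two
  omega

end SimpleGraph

theorem stmt18 {V : Type*} [Fintype V] [DecidableEq V]
    (H : SimpleGraph V) [DecidableRel H.Adj] (hH : H.IsTree)
    (A : Finset V)
    -- every inactive vertex (vertex of Aᶜ), except possibly one, has degree ≥ 2
    (hdeg : ∃ w : V, ∀ v ∈ Aᶜ, v ≠ w → 2 ≤ H.degree v) :
    (∑ v ∈ A, H.degree v ≤ 2 * A.card - 1) ∧
    (∀ C Chat : Finset V, Disjoint C Chat → C ∪ Chat = A →
      ∀ m : ℕ, 2 ≤ m → C.card ≤ m - 1 →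
      (∑ v ∈ C, (H.degree v : ℝ)) + ∑ v ∈ Chat, (H.degree v : ℝ) ≤
        (2 - 1 / ((m : ℝ) - 1)) * C.card + 2 * Chat.card) := by
  obtain ⟨w, hw⟩ := hdeg
  have hA := hH.sum_degree_le A w hw
  refine ⟨hA, fun C Chat hdisj hun m hm hC => ?_⟩
  subst hun
  rw [sum_union hdisj, card_union_of_disjoint hdisj] at hA
  exact_mod_cast Nat.cast_le_two_sub_one_div_mul_add hA hm hC
end
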